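/- Let (X, T, μ) be an ergodic probability measure-preserving system, W a set of positive measure with first return map F and return time τ. If there exists N ≥ 1 and a measurable derivative cocycle D with log|DF^N| ≥ log 2 on W (i.e. |DF^N(z)| ≥ 2 wherever defined), and sup log|DT| = log L < ∞, then the Lyapunov exponent λ(z) = lim (1/n) log|DT^n(z)| exists μ-a.e., is constant, and satisfies μ(W)·(log 2)/N ≤ λ ≤ log L; in particular λ > 0. -/

import Mathlib

open MeasureTheory Filter Topology

/-- The first return time of `z` to `W` under `T`. -/
noncomputable def firstReturn {X : Type*} (T : X → X) (W : Set X) (z : X) : ℕ :=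
  sInf {n : ℕ | 1 ≤ n ∧ T^[n] z ∈ W}

/-- The `n`-th return time `τ^n` to `W` under `T`. -/
noncomputable def returnTimeN {X : Type*} (T : X → X) (W : Set X) : ℕ → X → ℕ
  | 0, _ => 0
  | (n + 1), z =>
      firstReturn T W z + returnTimeN T W n (T^[firstReturn T W z] z)

/-!
Write `S_n f` for the Birkhoff sums of `f` along `T`. Birkhoff's ergodic theorem, which follows
from the maximal ergodic theorem, gives `S_n g / n → ∫ g` almost everywhere as soon as `g` is
integrable, so the point is to show that `g` is integrable and to bound `∫ g` from below.

Take a typical point `z ∈ W` and the times `a_k = τ^{kN}(z)` of its `kN`-th return to `W`. Up to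
time `a_k` the orbit has visited `W` exactly `kN` times, and it has run through `k` blocks of `N`
returns, each contributing at least `log 2` to `S_{a_k} g`. As the visit frequency `kN / a_k`
tends to `μ W` (Kac), every integrable `f ≥ g` satisfies `∫ f ≥ μ W · log 2 / N`. For the
truncations `f = max g (log L - M)` this bounds `∫ min (log L - g) M` uniformly in `M`, so
`log L - g` is integrable by monotone convergence; for `f = g` it is the lower bound on `λ = ∫ g`.
-/

section Birkhoff

variable {X : Type*} {T : X → X} {f : X → ℝ}

/-- `birkhoffMax T f n x = max_{k ≤ n} birkhoffSum T f k x`. -/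
noncomputable def birkhoffMax (T : X → X) (f : X → ℝ) : ℕ → X → ℝ
  | 0, _ => 0
  | n + 1, x => max 0 (f x + birkhoffMax T f n (T x))

theorem birkhoffMax_nonneg (n : ℕ) (x : X) : 0 ≤ birkhoffMax T f n x := by
  cases n with
  | zero => exact le_rfl
  | succ n => exact le_max_left _ _

theorem birkhoffMax_le_succ (n : ℕ) (x : X) : birkhoffMax T f n x ≤ birkhoffMax T f (n + 1) x := by
  induction n generalizing x with
  | zero => exact le_max_left _ _
  | succ n ih => exact max_le_max le_rfl (add_le_add_right (ih (T x)) _)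

theorem birkhoffSum_le_birkhoffMax {k n : ℕ} (hkn : k ≤ n) (x : X) :
    birkhoffSum T f k x ≤ birkhoffMax T f n x := by
  induction n generalizing k x with
  | zero => simp [Nat.le_zero.1 hkn, birkhoffSum_zero, birkhoffMax]
  | succ n ih =>
    cases k with
    | zero => exact (birkhoffSum_zero T f x).trans_le (birkhoffMax_nonneg _ _)
    | succ k =>
      rw [birkhoffSum_succ']
      exact (add_le_add_right (ih (by omega) (T x)) _).trans (le_max_right _ _)

theorem bddAbove_range_birkhoffSum_apply_iff (x : X) :
    BddAbove (Set.range fun n => birkhoffSum T f n (T x)) ↔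
      BddAbove (Set.range fun n => birkhoffSum T f n x) := by
  simp only [bddAbove_def, Set.forall_mem_range]
  constructor
  · rintro ⟨K, hK⟩
    refine ⟨max 0 (f x + K), fun n => ?_⟩
    cases n with
    | zero => exact (birkhoffSum_zero T f x).trans_le (le_max_left _ _)
    | succ n =>
      rw [birkhoffSum_succ']
      exact (add_le_add_right (hK n) _).trans (le_max_right _ _)
  · rintro ⟨K, hK⟩
    refine ⟨K - f x, fun n => ?_⟩
    have := hK (n + 1)
    rw [birkhoffSum_succ'] at this
    linarith

variable [MeasurableSpace X] {μ : Measure X}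

theorem measurable_birkhoffSum (hT : Measurable T) (hf : Measurable f) (n : ℕ) :
    Measurable (birkhoffSum T f n) :=
  Finset.measurable_sum _ fun k _ => hf.comp (hT.iterate k)

theorem measurable_birkhoffMax (hT : Measurable T) (hf : Measurable f) (n : ℕ) :
    Measurable (birkhoffMax T f n) := by
  induction n with
  | zero => exact measurable_const
  | succ n ih => exact measurable_const.max (hf.add (ih.comp hT))

theorem integrable_birkhoffMax (hT : MeasurePreserving T μ μ) (hf : Integrable f μ) (n : ℕ) :
    Integrable (birkhoffMax T f n) μ := by
  induction n with
  | zero => exact integrable_zero _ _ _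
  | succ n ih => exact (integrable_zero _ _ _).sup (hf.add (hT.integrable_comp_of_integrable ih))

theorem setIntegral_birkhoffMax_pos_nonneg (hT : MeasurePreserving T μ μ) (hf : Measurable f)
    (hfi : Integrable f μ) (n : ℕ) : 0 ≤ ∫ x in {x | 0 < birkhoffMax T f n x}, f x ∂μ := by
  set M := birkhoffMax T f n
  set A := {x | 0 < M x}
  have hA : MeasurableSet A :=
    measurableSet_lt measurable_const (measurable_birkhoffMax hT.measurable hf n)
  have hM : Integrable M μ := integrable_birkhoffMax hT hfi n
  have hMT : Integrable (M ∘ T) μ := hT.integrable_comp_of_integrable hM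
  have hstep : ∀ x ∈ A, M x - M (T x) ≤ f x := by
    intro x hx
    cases n with
    | zero => exact (lt_irrefl (0 : ℝ) hx).elim
    | succ n =>
      have hpos : 0 < f x + birkhoffMax T f n (T x) := by
        simpa [A, M, birkhoffMax] using hx
      have hMx : M x = f x + birkhoffMax T f n (T x) := max_eq_right hpos.le
      linarith [birkhoffMax_le_succ (T := T) (f := f) n (T x)]
  have hMA : ∫ x in A, M x ∂μ = ∫ x, M x ∂μ :=
    setIntegral_eq_integral_of_forall_compl_eq_zero fun x hx =>
      le_antisymm (not_lt.1 hx) (birkhoffMax_nonneg n x)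
  have hMTA : ∫ x in A, M (T x) ∂μ ≤ ∫ x, M (T x) ∂μ :=
    setIntegral_le_integral hMT (ae_of_all _ fun x => birkhoffMax_nonneg n (T x))
  have hinv : ∫ x, M (T x) ∂μ = ∫ x, M x ∂μ := by
    have hMmap : AEStronglyMeasurable M (Measure.map T μ) := by
      rw [hT.map_eq]; exact hM.aestronglyMeasurable
    rw [← integral_map hT.aemeasurable hMmap, hT.map_eq]
  calc 0 = ∫ x, M x ∂μ - ∫ x, M (T x) ∂μ := by rw [hinv, sub_self]
    _ ≤ ∫ x in A, M x ∂μ - ∫ x in A, M (T x) ∂μ := by rw [hMA]; exact sub_le_sub_left hMTA _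
    _ = ∫ x in A, (M x - M (T x)) ∂μ := (integral_sub hM.integrableOn hMT.integrableOn).symm
    _ ≤ ∫ x in A, f x ∂μ := setIntegral_mono_on (hM.sub hMT).integrableOn hfi.integrableOn hA hstep

theorem integral_nonneg_of_ae_exists_birkhoffSum_pos (hT : MeasurePreserving T μ μ)
    (hf : Measurable f) (hfi : Integrable f μ) (h : ∀ᵐ x ∂μ, ∃ n, 0 < birkhoffSum T f n x) :
    0 ≤ ∫ x, f x ∂μ := by
  set A : ℕ → Set X := fun n => {x | 0 < birkhoffMax T f n x}
  have hA : ∀ n, MeasurableSet (A n) := fun n =>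
    measurableSet_lt measurable_const (measurable_birkhoffMax hT.measurable hf n)
  have hAmono : Monotone A := monotone_nat_of_le_succ fun n x hx =>
    lt_of_lt_of_le hx (birkhoffMax_le_succ n x)
  have hAfull : (⋃ n, A n) =ᵐ[μ] (Set.univ : Set X) := by
    refine eventuallyEq_univ.2 (h.mono fun x ⟨n, hn⟩ => Set.mem_iUnion.2 ⟨n, ?_⟩)
    exact hn.trans_le (birkhoffSum_le_birkhoffMax le_rfl x)
  have hlim := tendsto_setIntegral_of_monotone hA hAmono hfi.integrableOn
  rw [setIntegral_congr_set hAfull, setIntegral_univ] at hlim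
  exact ge_of_tendsto' hlim fun n => setIntegral_birkhoffMax_pos_nonneg hT hf hfi n

theorem ae_bddAbove_birkhoffSum_of_integral_neg (hT : Ergodic T μ) (hf : Measurable f)
    (hfi : Integrable f μ) (h : ∫ x, f x ∂μ < 0) :
    ∀ᵐ x ∂μ, BddAbove (Set.range fun n => birkhoffSum T f n x) := by
  set B := {x | BddAbove (Set.range fun n => birkhoffSum T f n x)}
  have hB : MeasurableSet B :=
    measurableSet_bddAbove_range (measurable_birkhoffSum hT.measurable hf)
  have hBinv : T ⁻¹' B = B := Set.ext bddAbove_range_birkhoffSum_apply_iff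
  rcases hT.measure_self_or_compl_eq_zero hB hBinv with hB0 | hBc
  · refine absurd (integral_nonneg_of_ae_exists_birkhoffSum_pos hT.toMeasurePreserving hf hfi ?_)
      h.not_ge
    filter_upwards [measure_eq_zero_iff_ae_notMem.1 hB0] with x hx
    obtain ⟨_, ⟨n, rfl⟩, hn⟩ := not_bddAbove_iff.1 hx 0
    exact ⟨n, hn⟩
  · exact hBc

theorem ae_eventually_birkhoffAverage_lt [IsProbabilityMeasure μ] (hT : Ergodic T μ)
    (hf : Measurable f) (hfi : Integrable f μ) {c : ℝ} (hc : ∫ x, f x ∂μ < c) :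
    ∀ᵐ x ∂μ, ∀ᶠ n in atTop, birkhoffAverage ℝ T f n x < c := by
  obtain ⟨c', hfc', hc'c⟩ := exists_between hc
  have hneg : ∫ x, (f x - c') ∂μ < 0 := by
    rw [integral_sub hfi (integrable_const c'), integral_const, probReal_univ, one_smul]
    linarith
  filter_upwards [ae_bddAbove_birkhoffSum_of_integral_neg hT (hf.sub measurable_const)
    (hfi.sub (integrable_const c')) hneg] with x ⟨K, hK⟩
  have hlim : Tendsto (fun n : ℕ => c' + K / n) atTop (𝓝 (c' + 0)) :=
    tendsto_const_nhds.add (tendsto_const_div_atTop_nhds_zero_nat K)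
  filter_upwards [hlim.eventually (gt_mem_nhds (show c' + 0 < c by linarith)),
    eventually_gt_atTop 0] with n hn hn0
  have hS : birkhoffSum T f n x - n * c' ≤ K := by
    simpa [birkhoffSum, Finset.sum_sub_distrib] using hK ⟨n, rfl⟩
  have hn' : (0 : ℝ) < n := by exact_mod_cast hn0
  calc birkhoffAverage ℝ T f n x = c' + (birkhoffSum T f n x - n * c') / n := by
        rw [birkhoffAverage, smul_eq_mul]; field_simp; ring
    _ ≤ c' + K / n := by gcongr
    _ < c := hn

theorem ae_eventually_lt_birkhoffAverage [IsProbabilityMeasure μ] (hT : Ergodic T μ)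
    (hf : Measurable f) (hfi : Integrable f μ) {c : ℝ} (hc : c < ∫ x, f x ∂μ) :
    ∀ᵐ x ∂μ, ∀ᶠ n in atTop, c < birkhoffAverage ℝ T f n x := by
  have hneg : ∫ x, (-f) x ∂μ < -c := by simpa [integral_neg] using hc
  filter_upwards [ae_eventually_birkhoffAverage_lt hT hf.neg hfi.neg hneg] with x hx
  filter_upwards [hx] with n hn
  simp only [birkhoffAverage_neg, Pi.neg_apply] at hn
  linarith

theorem ae_tendsto_birkhoffAverage [IsProbabilityMeasure μ] (hT : Ergodic T μ)
    (hf : Measurable f) (hfi : Integrable f μ) :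
    ∀ᵐ x ∂μ, Tendsto (birkhoffAverage ℝ T f · x) atTop (𝓝 (∫ x, f x ∂μ)) := by
  have hup : ∀ᵐ x ∂μ, ∀ q : ℚ, ∫ x, f x ∂μ < q →
      ∀ᶠ n in atTop, birkhoffAverage ℝ T f n x < q := by
    refine ae_all_iff.2 fun q => ?_
    by_cases hq : ∫ x, f x ∂μ < q
    · exact (ae_eventually_birkhoffAverage_lt hT hf hfi hq).mono fun _ hx _ => hx
    · exact ae_of_all _ fun _ h => absurd h hq
  have hlow : ∀ᵐ x ∂μ, ∀ q : ℚ, (q : ℝ) < ∫ x, f x ∂μ →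
      ∀ᶠ n in atTop, (q : ℝ) < birkhoffAverage ℝ T f n x := by
    refine ae_all_iff.2 fun q => ?_
    by_cases hq : (q : ℝ) < ∫ x, f x ∂μ
    · exact (ae_eventually_lt_birkhoffAverage hT hf hfi hq).mono fun _ hx _ => hx
    · exact ae_of_all _ fun _ h => absurd h hq
  filter_upwards [hup, hlow] with x hx hx'
  refine tendsto_order.2 ⟨fun a ha => ?_, fun b hb => ?_⟩
  · obtain ⟨q, haq, hq⟩ := exists_rat_btwn ha
    exact (hx' q hq).mono fun _ hn => haq.trans hn
  · obtain ⟨q, hq, hqb⟩ := exists_rat_btwn hb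
    exact (hx q hq).mono fun _ hn => hn.trans hqb

end Birkhoff

section ReturnTimes

variable {X : Type*} {T : X → X} {W : Set X} {z : X}

theorem frequently_iterate_iterate_mem (h : ∃ᶠ n in atTop, T^[n] z ∈ W) (m : ℕ) :
    ∃ᶠ n in atTop, T^[n] (T^[m] z) ∈ W := by
  refine frequently_atTop.2 fun k => ?_
  obtain ⟨n, hn, hmem⟩ := frequently_atTop.1 h (k + m)
  refine ⟨n - m, by omega, ?_⟩
  rwa [← Function.iterate_add_apply, Nat.sub_add_cancel (by omega)]

theorem firstReturn_pos_and_mem (h : ∃ᶠ n in atTop, T^[n] z ∈ W) :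
    0 < firstReturn T W z ∧ T^[firstReturn T W z] z ∈ W :=
  Nat.sInf_mem (frequently_atTop.1 h 1)

theorem iterate_notMem_of_lt_firstReturn {r : ℕ} (hr : 0 < r) (hrz : r < firstReturn T W z) :
    T^[r] z ∉ W :=
  fun hmem => Nat.notMem_of_lt_sInf hrz ⟨hr, hmem⟩

theorem returnTimeN_add (a b : ℕ) (z : X) :
    returnTimeN T W (a + b) z =
      returnTimeN T W a z + returnTimeN T W b (T^[returnTimeN T W a z] z) := by
  induction a generalizing z with
  | zero => simp [returnTimeN]
  | succ a ih =>
    rw [Nat.add_right_comm, returnTimeN, returnTimeN, ih, add_assoc,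
      add_comm (firstReturn T W z) (returnTimeN T W a _), Function.iterate_add_apply]

theorem iterate_returnTimeN_mem (hz : z ∈ W) (h : ∃ᶠ n in atTop, T^[n] z ∈ W) (m : ℕ) :
    T^[returnTimeN T W m z] z ∈ W := by
  induction m generalizing z with
  | zero => exact hz
  | succ m ih =>
    rw [returnTimeN, add_comm, Function.iterate_add_apply]
    exact ih (firstReturn_pos_and_mem h).2 (frequently_iterate_iterate_mem h _)

theorem returnTimeN_strictMono (h : ∃ᶠ n in atTop, T^[n] z ∈ W) :
    StrictMono fun m => returnTimeN T W m z := by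
  refine strictMono_nat_of_lt_succ fun m => ?_
  induction m generalizing z with
  | zero => simpa [returnTimeN] using (firstReturn_pos_and_mem h).1
  | succ m ih =>
    exact Nat.add_lt_add_left (ih (frequently_iterate_iterate_mem h _)) _

theorem birkhoffSum_indicator_firstReturn (hz : z ∈ W) (h : ∃ᶠ n in atTop, T^[n] z ∈ W) :
    birkhoffSum T (W.indicator 1) (firstReturn T W z) z = (1 : ℝ) := by
  rw [birkhoffSum, Finset.sum_eq_single_of_mem 0
    (Finset.mem_range.2 (firstReturn_pos_and_mem h).1)]
  · simp [hz]
  · intro r hr hr0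
    simp [iterate_notMem_of_lt_firstReturn (Nat.pos_of_ne_zero hr0) (Finset.mem_range.1 hr)]

theorem birkhoffSum_indicator_returnTimeN (hz : z ∈ W) (h : ∃ᶠ n in atTop, T^[n] z ∈ W)
    (m : ℕ) : birkhoffSum T (W.indicator 1) (returnTimeN T W m z) z = (m : ℝ) := by
  induction m generalizing z with
  | zero => simp [returnTimeN, birkhoffSum_zero]
  | succ m ih =>
    obtain ⟨-, hzW'⟩ := firstReturn_pos_and_mem h
    rw [returnTimeN, birkhoffSum_add, birkhoffSum_indicator_firstReturn hz h,
      ih hzW' (frequently_iterate_iterate_mem h _)]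
    push_cast
    ring

theorem mul_le_birkhoffSum_returnTimeN (hz : z ∈ W) (h : ∃ᶠ n in atTop, T^[n] z ∈ W)
    {f : X → ℝ} {N : ℕ} {c : ℝ}
    (hblock : ∀ m, T^[m] z ∈ W → c ≤ birkhoffSum T f (returnTimeN T W N (T^[m] z)) (T^[m] z))
    (k : ℕ) : k * c ≤ birkhoffSum T f (returnTimeN T W (k * N) z) z := by
  induction k generalizing z with
  | zero => simp [returnTimeN, birkhoffSum_zero]
  | succ k ih =>
    set y := T^[returnTimeN T W N z] z
    have hfirst : c ≤ birkhoffSum T f (returnTimeN T W N z) z := hblock 0 hz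
    have hy : k * c ≤ birkhoffSum T f (returnTimeN T W (k * N) y) y := by
      refine ih (iterate_returnTimeN_mem hz h N) (frequently_iterate_iterate_mem h _) fun m hm => ?_
      rw [← Function.iterate_add_apply] at hm ⊢
      exact hblock _ hm
    rw [Nat.succ_mul, Nat.add_comm (k * N) N, returnTimeN_add, birkhoffSum_add]
    push_cast
    linarith

end ReturnTimes

section Truncation

variable {X : Type*} [MeasurableSpace X] {μ : Measure X} {g : X → ℝ} {C : ℝ}

theorem integrable_max_const_of_le [IsFiniteMeasure μ] (hg : Measurable g) (hgC : ∀ x, g x ≤ C)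
    (K : ℝ) : Integrable (fun x => max (g x) K) μ := by
  refine .of_bound (hg.max measurable_const).aestronglyMeasurable (|C| + |K|)
    (ae_of_all _ fun x => ?_)
  rw [Real.norm_eq_abs, abs_le]
  constructor
  · linarith [le_max_right (g x) K, neg_abs_le K, abs_nonneg C]
  · exact max_le (by linarith [hgC x, le_abs_self C, abs_nonneg K])
      (by linarith [le_abs_self K, abs_nonneg C])

theorem integrable_of_forall_le_integral_max [IsFiniteMeasure μ] (hg : Measurable g)
    (hgC : ∀ x, g x ≤ C) {c : ℝ} (h : ∀ M : ℕ, c ≤ ∫ x, max (g x) (C - M) ∂μ) :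
    Integrable g μ := by
  have htrunc : ∀ M : ℕ, ∫⁻ x, ENNReal.ofReal (min (C - g x) M) ∂μ ≤
      ENNReal.ofReal ((∫ _, C ∂μ) - c) := by
    intro M
    have hmin : ∀ x, min (C - g x) M = C - max (g x) (C - M) := fun x => by
      rw [← min_sub_sub_left, sub_sub_cancel]
    have hmax := integrable_max_const_of_le (μ := μ) hg hgC (C - M)
    have hint : Integrable (fun x => C - max (g x) (C - M)) μ := (integrable_const C).sub hmax
    simp_rw [hmin]
    rw [← ofReal_integral_eq_lintegral_ofReal hint
        (ae_of_all _ fun x => sub_nonneg.2 (max_le (hgC x) (by simp))),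
      integral_sub (integrable_const C) hmax]
    exact ENNReal.ofReal_le_ofReal (sub_le_sub_left (h M) _)
  have hsup : ∫⁻ x, ENNReal.ofReal (C - g x) ∂μ =
      ⨆ M : ℕ, ∫⁻ x, ENNReal.ofReal (min (C - g x) M) ∂μ := by
    rw [← lintegral_iSup (f := fun (M : ℕ) x => ENNReal.ofReal (min (C - g x) M))
      (fun M => ((measurable_const.sub hg).min measurable_const).ennreal_ofReal)
      (fun M M' hMM' x => ENNReal.ofReal_le_ofReal (min_le_min_left _ (Nat.cast_le.2 hMM')))]
    congr with x
    refine le_antisymm ?_ (iSup_le fun M => ENNReal.ofReal_le_ofReal (min_le_left _ _))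
    obtain ⟨M, hM⟩ := exists_nat_ge (C - g x)
    exact le_iSup_of_le M (by rw [min_eq_left hM])
  have hCg : Integrable (fun x => C - g x) μ :=
    (lintegral_ofReal_ne_top_iff_integrable (measurable_const.sub hg).aestronglyMeasurable
      (ae_of_all _ fun x => sub_nonneg.2 (hgC x))).1
      (ne_top_of_le_ne_top ENNReal.ofReal_ne_top (hsup ▸ iSup_le htrunc))
  exact ((integrable_const C).sub hCg).congr (ae_of_all _ fun x => sub_sub_cancel C (g x))

end Truncation

section Inducing

variable {X : Type*} [MeasurableSpace X] {μ : Measure X} {T : X → X} {W : Set X} {f : X → ℝ}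

theorem le_integral_of_le_birkhoffSum_returnTimeN [IsProbabilityMeasure μ] (hT : Ergodic T μ)
    (hW : MeasurableSet W) (hWpos : μ W ≠ 0) (hf : Measurable f) (hfi : Integrable f μ)
    {N : ℕ} (hN : 0 < N) {c : ℝ}
    (hblock : ∀ᵐ z ∂μ, z ∈ W → c ≤ birkhoffSum T f (returnTimeN T W N z) z) :
    (μ W).toReal * c / N ≤ ∫ x, f x ∂μ := by
  have horbit : ∀ᵐ z ∂μ, ∀ m, T^[m] z ∈ W →
      c ≤ birkhoffSum T f (returnTimeN T W N (T^[m] z)) (T^[m] z) :=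
    ae_all_iff.2 fun m => (hT.toMeasurePreserving.iterate m).quasiMeasurePreserving.ae hblock
  have hχ := ae_tendsto_birkhoffAverage hT (measurable_one.indicator hW)
    ((integrable_const (1 : ℝ)).indicator hW)
  rw [integral_indicator_one hW] at hχ
  obtain ⟨z, hzW, hrec, hzblock, hzχ, hzf⟩ : ∃ z ∈ W, (∃ᶠ n in atTop, T^[n] z ∈ W) ∧
      (∀ m, T^[m] z ∈ W → c ≤ birkhoffSum T f (returnTimeN T W N (T^[m] z)) (T^[m] z)) ∧
      Tendsto (birkhoffAverage ℝ T (W.indicator 1) · z) atTop (𝓝 (μ.real W)) ∧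
      Tendsto (birkhoffAverage ℝ T f · z) atTop (𝓝 (∫ x, f x ∂μ)) := by
    refine Measure.exists_mem_of_measure_ne_zero_of_ae hWpos ((ae_restrict_iff' hW).2 ?_)
    filter_upwards [hT.toMeasurePreserving.conservative.ae_mem_imp_frequently_image_mem
      hW.nullMeasurableSet, horbit, hχ, ae_tendsto_birkhoffAverage hT hf hfi]
      with z h1 h2 h3 h4 hz using ⟨h1 hz, h2, h3, h4⟩
  set a : ℕ → ℕ := fun k => returnTimeN T W (k * N) z
  have ha : Tendsto a atTop atTop :=
    ((returnTimeN_strictMono hrec).comp (strictMono_mul_right_of_pos hN)).tendsto_atTop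
  have hlim : c / N * μ.real W ≤ ∫ x, f x ∂μ := by
    refine le_of_tendsto_of_tendsto' ((hzχ.comp ha).const_mul (c / N)) (hzf.comp ha) fun k => ?_
    simp only [Function.comp_apply, birkhoffAverage, smul_eq_mul, a,
      birkhoffSum_indicator_returnTimeN hzW hrec]
    have hN' : (N : ℝ) ≠ 0 := by positivity
    calc c / N * ((returnTimeN T W (k * N) z : ℝ)⁻¹ * ((k * N : ℕ) : ℝ))
        = (returnTimeN T W (k * N) z : ℝ)⁻¹ * (k * c) := by push_cast; field_simp
      _ ≤ (returnTimeN T W (k * N) z : ℝ)⁻¹ * birkhoffSum T f (returnTimeN T W (k * N) z) z :=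
        mul_le_mul_of_nonneg_left (mul_le_birkhoffSum_returnTimeN hzW hrec hzblock k)
          (by positivity)
  rw [measureReal_def] at hlim
  linarith [show c / N * (μ W).toReal = (μ W).toReal * c / N by ring]

end Inducing

theorem stmt7_general {X : Type*} [MeasurableSpace X] (μ : Measure X) [IsProbabilityMeasure μ]
    (T : X → X) (hT : Ergodic T μ)
    (W : Set X) (hW : MeasurableSet W) (hWpos : 0 < μ W)
    (g : X → ℝ) (hg : Measurable g) (L : ℝ)
    (hgL : ∀ x, g x ≤ Real.log L)
    (N : ℕ) (hN : 1 ≤ N)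
    (hexp : ∀ᵐ z ∂μ, z ∈ W → 0 < returnTimeN T W N z ∧
      Real.log 2 ≤ ∑ j ∈ Finset.range (returnTimeN T W N z), g (T^[j] z)) :
    ∃ lam : ℝ, 0 < lam ∧ (μ W).toReal * Real.log 2 / N ≤ lam ∧ lam ≤ Real.log L ∧
      ∀ᵐ z ∂μ, Tendsto (fun n : ℕ => (∑ j ∈ Finset.range n, g (T^[j] z)) / n)
        atTop (𝓝 lam) := by
  have hblock : ∀ᵐ z ∂μ, z ∈ W → Real.log 2 ≤ birkhoffSum T g (returnTimeN T W N z) z :=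
    hexp.mono fun z h hz => (h hz).2
  have hgi : Integrable g μ := integrable_of_forall_le_integral_max hg hgL fun M =>
    le_integral_of_le_birkhoffSum_returnTimeN hT hW hWpos.ne' (hg.max measurable_const)
      (integrable_max_const_of_le hg hgL _) hN
      (hblock.mono fun z h hz => (h hz).trans (Finset.sum_le_sum fun _ _ => le_max_left _ _))
  have hlow := le_integral_of_le_birkhoffSum_returnTimeN hT hW hWpos.ne' hg hgi hN hblock
  have hμW : 0 < (μ W).toReal := ENNReal.toReal_pos hWpos.ne' (measure_ne_top μ W)
  have hlog2 : 0 < Real.log 2 := Real.log_pos one_lt_two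
  refine ⟨∫ x, g x ∂μ, lt_of_lt_of_le (by positivity) hlow, hlow, ?_, ?_⟩
  · simpa using integral_mono hgi (integrable_const _) hgL
  · filter_upwards [ae_tendsto_birkhoffAverage hT hg hgi] with z hz
    simpa [birkhoffAverage, birkhoffSum, div_eq_inv_mul] using hz

/-- If `(X, T, μ)` is ergodic, `W` has positive measure, the induced map `F = T^τ`
satisfies `|DF^N| ≥ 2` on `W` (expressed via the additive cocycle `g = log|DT|`
summed along the `N`-th return block), and `log|DT| ≤ log L`, then the Lyapunov
exponent `λ(z) = lim (1/n) Σ_{j<n} g(T^j z)` exists `μ`-a.e., is constant, and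
satisfies `μ(W) log 2 / N ≤ λ ≤ log L`; in particular `λ > 0`. -/
theorem stmt7 {X : Type*} [MeasurableSpace X] (μ : Measure X) [IsProbabilityMeasure μ]
    (T : X → X) (hT : Ergodic T μ)
    (W : Set X) (hW : MeasurableSet W) (hWpos : 0 < μ W)
    (g : X → ℝ) (hg : Measurable g) (L : ℝ) (hL : 1 < L)
    (hgL : ∀ x, g x ≤ Real.log L)
    (N : ℕ) (hN : 1 ≤ N)
    (hexp : ∀ᵐ z ∂μ, z ∈ W → 0 < returnTimeN T W N z ∧
      Real.log 2 ≤ ∑ j ∈ Finset.range (returnTimeN T W N z), g (T^[j] z)) :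
    ∃ lam : ℝ, 0 < lam ∧ (μ W).toReal * Real.log 2 / N ≤ lam ∧ lam ≤ Real.log L ∧
      ∀ᵐ z ∂μ, Tendsto (fun n : ℕ => (∑ j ∈ Finset.range n, g (T^[j] z)) / n)
        atTop (𝓝 lam) :=
  stmt7_general μ T hT W hW hWpos g hg L hgL N hN hexp
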